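/- arXiv:1805.02412 — 2 statements merged into one kernel-verified Lean document; each statement's English description precedes it below -/
import Mathlib

section
/- Let G be a finite simple chordal graph that is P_9-free, IR an irredundant set of G, and a ∈ RN = V(G) \ IR a redundant vertex. Then a is partially adjacent to at most one irredundant component of G: there is at most one irredundant component C of G such that N(a) ∩ C ≠ ∅ and C ⊄ N(a); to every other irredundant component, a is either non-adjacent or complete. -/
variable {V : Type*}

/-- The closed neighborhood `N[x]` of a vertex. -/
def cnbr (G : SimpleGraph V) (x : V) : Set V := insert x (G.neighborSet x)

/-- `N[X] = ⋃ x ∈ X, N[x]`. -/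
def cnbrSet (G : SimpleGraph V) (X : Set V) : Set V := ⋃ x ∈ X, cnbr G x

/-- `N(X) = N[X] \ X`. -/
def onbrSet (G : SimpleGraph V) (X : Set V) : Set V := cnbrSet G X \ X

/-- `D` dominates `X` if `X ⊆ N[D]`. -/
def Dominates (G : SimpleGraph V) (D X : Set V) : Prop := X ⊆ cnbrSet G D

/-- `D` is a minimal dominating set of `G`. -/
def IsMinDomSet (G : SimpleGraph V) (D : Set V) : Prop :=
  Dominates G D Set.univ ∧ ∀ D' : Set V, D' ⊂ D → ¬ Dominates G D' Set.univ

/-- `Priv(D, x)`: private neighbors of `x` w.r.t. `D`. -/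
def priv (G : SimpleGraph V) (D : Set V) (x : V) : Set V := {u | cnbr G u ∩ D = {x}}

/-- `IR` is an irredundant set of `G`. -/
def IsIrredundantSet (G : SimpleGraph V) (IR : Set V) : Prop :=
  (∀ v : V, ∃ x ∈ IR, cnbr G x ⊆ cnbr G v) ∧
  (∀ x ∈ IR, ∀ v : V, ¬ cnbr G v ⊂ cnbr G x) ∧
  (∀ x ∈ IR, ∀ y ∈ IR, x ≠ y → cnbr G x ≠ cnbr G y)

/-- `Priv_IR(D, x) = Priv(D, x) ∩ IR`. -/
def privIR (G : SimpleGraph V) (IR D : Set V) (x : V) : Set V := priv G D x ∩ IR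

/-- `A ∈ D_RN(G)`: `A` is the intersection of a minimal dominating set with `RN = V \ IR`. -/
def memDRN (G : SimpleGraph V) (IR A : Set V) : Prop :=
  ∃ D : Set V, IsMinDomSet G D ∧ A = D ∩ IRᶜ

/-- `G` is `P_k`-free: it has no induced path on `k` vertices. -/
def PkFree (G : SimpleGraph V) (k : ℕ) : Prop :=
  ¬ ∃ f : Fin k → V, Function.Injective f ∧
      ∀ i j : Fin k, G.Adj (f i) (f j) ↔ (i.val + 1 = j.val ∨ j.val + 1 = i.val)

/-- `G` is chordal: no induced cycle on `n ≥ 4` vertices. -/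
def Chordal (G : SimpleGraph V) : Prop :=
  ∀ n : ℕ, 4 ≤ n → ¬ ∃ f : ZMod n → V, Function.Injective f ∧
      ∀ i j : ZMod n, G.Adj (f i) (f j) ↔ (i = j + 1 ∨ j = i + 1)

/-- `C` is a connected component of the subgraph of `G` induced by `S`. -/
def IsCompOf (G : SimpleGraph V) (S C : Set V) : Prop :=
  C ⊆ S ∧ C.Nonempty ∧ (G.induce C).Connected ∧
    ∀ x ∈ C, ∀ y ∈ S, G.Adj x y → y ∈ C

/-- `B(A)`: the elements of `A` having an irredundant private neighbor in some irredundant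
component entirely contained in `N(A)`. -/
def Bset (G : SimpleGraph V) (IR A : Set V) : Set V :=
  {a ∈ A | ∃ C : Set V, IsCompOf G IR C ∧ C ⊆ onbrSet G A ∧ (privIR G IR A a ∩ C).Nonempty}

/-- Domination inside the subgraph induced by `C`: every `u ∈ X` equals, or is adjacent
(within `C`) to, some `d ∈ D`.  For `D, X ⊆ C` this is domination in `G[C]`. -/
def domIn (G : SimpleGraph V) (C D X : Set V) : Prop :=
  ∀ u ∈ X, ∃ d ∈ D, u = d ∨ (G.Adj d u ∧ d ∈ C ∧ u ∈ C)



section Aux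
set_option linter.unreachableTactic false
set_option linter.unusedTactic false

lemma chordal_no_cycle (G : SimpleGraph V) (hch : Chordal G) (n : ℕ) (hn : 4 ≤ n)
    (f : Fin n → V) (hinj : Function.Injective f)
    (hadj : ∀ i j : Fin n, G.Adj (f i) (f j) ↔
      ((i.val + 1) % n = j.val ∨ (j.val + 1) % n = i.val)) : False := by
  have hnz : NeZero n := ⟨by omega⟩
  have h1n : Fact (1 < n) := ⟨by omega⟩
  have key : ∀ i j : ZMod n, ((i.val + 1) % n = j.val) ↔ j = i + 1 := by
    intro i j
    have hv : (i + 1).val = (i.val + 1) % n := by rw [ZMod.val_add, ZMod.val_one]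
    constructor
    · intro h; exact ZMod.val_injective n (by rw [hv, h])
    · intro h; rw [h, hv]
  apply hch n hn
  refine ⟨fun i => f ⟨i.val, ZMod.val_lt i⟩, ?_, ?_⟩
  · intro i j h
    exact ZMod.val_injective n (congrArg Fin.val (hinj h))
  · intro i j
    rw [hadj]
    simp only [Fin.val_mk]
    rw [key, key]
    tauto

lemma noC4 (G : SimpleGraph V) (hch : Chordal G) (v0 v1 v2 v3 : V)
    (e01 : G.Adj v0 v1) (e12 : G.Adj v1 v2) (e23 : G.Adj v2 v3) (e30 : G.Adj v3 v0) (n02 : ¬ G.Adj v0 v2) (n13 : ¬ G.Adj v1 v3) (d02 : v0 ≠ v2) (d13 : v1 ≠ v3) : False := by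
  have m0 : (![v0, v1, v2, v3] : Fin 4 → V) 0 = v0 := rfl
  have m1 : (![v0, v1, v2, v3] : Fin 4 → V) 1 = v1 := rfl
  have m2 : (![v0, v1, v2, v3] : Fin 4 → V) 2 = v2 := rfl
  have m3 : (![v0, v1, v2, v3] : Fin 4 → V) 3 = v3 := rfl
  have e01' := e01.symm
  have d01a := e01.ne
  have d01b := e01.ne'
  have e12' := e12.symm
  have d12a := e12.ne
  have d12b := e12.ne'
  have e23' := e23.symm
  have d23a := e23.ne
  have d23b := e23.ne'
  have e30' := e30.symm
  have d30a := e30.ne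
  have d30b := e30.ne'
  have n02' : ¬ G.Adj v2 v0 := fun h => n02 h.symm
  have d02' := d02.symm
  have n13' : ¬ G.Adj v3 v1 := fun h => n13 h.symm
  have d13' := d13.symm
  apply chordal_no_cycle G hch 4 (by norm_num) ![v0, v1, v2, v3]
  · intro i j h
    fin_cases i <;> fin_cases j <;>
      simp only [m0,m1,m2,m3] at h <;>
      first | rfl | exact absurd h (by assumption)
  · intro i j
    fin_cases i <;> fin_cases j <;>
      simp only [m0,m1,m2,m3] <;> norm_num <;>
      first | assumption | exact G.irrefl

lemma noC5 (G : SimpleGraph V) (hch : Chordal G) (v0 v1 v2 v3 v4 : V)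
    (e01 : G.Adj v0 v1) (e12 : G.Adj v1 v2) (e23 : G.Adj v2 v3) (e34 : G.Adj v3 v4) (e40 : G.Adj v4 v0) (n02 : ¬ G.Adj v0 v2) (n03 : ¬ G.Adj v0 v3) (n13 : ¬ G.Adj v1 v3) (n14 : ¬ G.Adj v1 v4) (n24 : ¬ G.Adj v2 v4) (d02 : v0 ≠ v2) (d03 : v0 ≠ v3) (d13 : v1 ≠ v3) (d14 : v1 ≠ v4) (d24 : v2 ≠ v4) : False := by
  have m0 : (![v0, v1, v2, v3, v4] : Fin 5 → V) 0 = v0 := rfl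
  have m1 : (![v0, v1, v2, v3, v4] : Fin 5 → V) 1 = v1 := rfl
  have m2 : (![v0, v1, v2, v3, v4] : Fin 5 → V) 2 = v2 := rfl
  have m3 : (![v0, v1, v2, v3, v4] : Fin 5 → V) 3 = v3 := rfl
  have m4 : (![v0, v1, v2, v3, v4] : Fin 5 → V) 4 = v4 := rfl
  have e01' := e01.symm
  have d01a := e01.ne
  have d01b := e01.ne'
  have e12' := e12.symm
  have d12a := e12.ne
  have d12b := e12.ne'
  have e23' := e23.symm
  have d23a := e23.ne
  have d23b := e23.ne'
  have e34' := e34.symm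
  have d34a := e34.ne
  have d34b := e34.ne'
  have e40' := e40.symm
  have d40a := e40.ne
  have d40b := e40.ne'
  have n02' : ¬ G.Adj v2 v0 := fun h => n02 h.symm
  have d02' := d02.symm
  have n03' : ¬ G.Adj v3 v0 := fun h => n03 h.symm
  have d03' := d03.symm
  have n13' : ¬ G.Adj v3 v1 := fun h => n13 h.symm
  have d13' := d13.symm
  have n14' : ¬ G.Adj v4 v1 := fun h => n14 h.symm
  have d14' := d14.symm
  have n24' : ¬ G.Adj v4 v2 := fun h => n24 h.symm
  have d24' := d24.symm
  apply chordal_no_cycle G hch 5 (by norm_num) ![v0, v1, v2, v3, v4]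
  · intro i j h
    fin_cases i <;> fin_cases j <;>
      simp only [m0,m1,m2,m3,m4] at h <;>
      first | rfl | exact absurd h (by assumption)
  · intro i j
    fin_cases i <;> fin_cases j <;>
      simp only [m0,m1,m2,m3,m4] <;> norm_num <;>
      first | assumption | exact G.irrefl

lemma noC6 (G : SimpleGraph V) (hch : Chordal G) (v0 v1 v2 v3 v4 v5 : V)
    (e01 : G.Adj v0 v1) (e12 : G.Adj v1 v2) (e23 : G.Adj v2 v3) (e34 : G.Adj v3 v4) (e45 : G.Adj v4 v5) (e50 : G.Adj v5 v0) (n02 : ¬ G.Adj v0 v2) (n03 : ¬ G.Adj v0 v3) (n04 : ¬ G.Adj v0 v4) (n13 : ¬ G.Adj v1 v3) (n14 : ¬ G.Adj v1 v4) (n15 : ¬ G.Adj v1 v5) (n24 : ¬ G.Adj v2 v4) (n25 : ¬ G.Adj v2 v5) (n35 : ¬ G.Adj v3 v5) (d02 : v0 ≠ v2) (d03 : v0 ≠ v3) (d04 : v0 ≠ v4) (d13 : v1 ≠ v3) (d14 : v1 ≠ v4) (d15 : v1 ≠ v5) (d24 : v2 ≠ v4) (d25 : v2 ≠ v5) (d35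 : v3 ≠ v5) : False := by
  have m0 : (![v0, v1, v2, v3, v4, v5] : Fin 6 → V) 0 = v0 := rfl
  have m1 : (![v0, v1, v2, v3, v4, v5] : Fin 6 → V) 1 = v1 := rfl
  have m2 : (![v0, v1, v2, v3, v4, v5] : Fin 6 → V) 2 = v2 := rfl
  have m3 : (![v0, v1, v2, v3, v4, v5] : Fin 6 → V) 3 = v3 := rfl
  have m4 : (![v0, v1, v2, v3, v4, v5] : Fin 6 → V) 4 = v4 := rfl
  have m5 : (![v0, v1, v2, v3, v4, v5] : Fin 6 → V) 5 = v5 := rfl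
  have e01' := e01.symm
  have d01a := e01.ne
  have d01b := e01.ne'
  have e12' := e12.symm
  have d12a := e12.ne
  have d12b := e12.ne'
  have e23' := e23.symm
  have d23a := e23.ne
  have d23b := e23.ne'
  have e34' := e34.symm
  have d34a := e34.ne
  have d34b := e34.ne'
  have e45' := e45.symm
  have d45a := e45.ne
  have d45b := e45.ne'
  have e50' := e50.symm
  have d50a := e50.ne
  have d50b := e50.ne'
  have n02' : ¬ G.Adj v2 v0 := fun h => n02 h.symm
  have d02' := d02.symm
  have n03' : ¬ G.Adj v3 v0 := fun h => n03 h.symm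
  have d03' := d03.symm
  have n04' : ¬ G.Adj v4 v0 := fun h => n04 h.symm
  have d04' := d04.symm
  have n13' : ¬ G.Adj v3 v1 := fun h => n13 h.symm
  have d13' := d13.symm
  have n14' : ¬ G.Adj v4 v1 := fun h => n14 h.symm
  have d14' := d14.symm
  have n15' : ¬ G.Adj v5 v1 := fun h => n15 h.symm
  have d15' := d15.symm
  have n24' : ¬ G.Adj v4 v2 := fun h => n24 h.symm
  have d24' := d24.symm
  have n25' : ¬ G.Adj v5 v2 := fun h => n25 h.symm
  have d25' := d25.symm
  have n35' : ¬ G.Adj v5 v3 := fun h => n35 h.symm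
  have d35' := d35.symm
  apply chordal_no_cycle G hch 6 (by norm_num) ![v0, v1, v2, v3, v4, v5]
  · intro i j h
    fin_cases i <;> fin_cases j <;>
      simp only [m0,m1,m2,m3,m4,m5] at h <;>
      first | rfl | exact absurd h (by assumption)
  · intro i j
    fin_cases i <;> fin_cases j <;>
      simp only [m0,m1,m2,m3,m4,m5] <;> norm_num <;>
      first | assumption | exact G.irrefl

lemma noC7 (G : SimpleGraph V) (hch : Chordal G) (v0 v1 v2 v3 v4 v5 v6 : V)
    (e01 : G.Adj v0 v1) (e12 : G.Adj v1 v2) (e23 : G.Adj v2 v3) (e34 : G.Adj v3 v4) (e45 : G.Adj v4 v5) (e56 : G.Adj v5 v6) (e60 : G.Adj v6 v0) (n02 : ¬ G.Adj v0 v2) (n03 : ¬ G.Adj v0 v3) (n04 : ¬ G.Adj v0 v4) (n05 : ¬ G.Adj v0 v5) (n13 : ¬ G.Adj v1 v3) (n14 : ¬ G.Adj v1 v4) (n15 : ¬ G.Adj v1 v5) (n16 : ¬ G.Adj v1 v6) (n24 : ¬ G.Adj v2 v4) (n25 : ¬ G.Adj v2 v5) (n26 : ¬ G.Adj v2 v6)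 (n35 : ¬ G.Adj v3 v5) (n36 : ¬ G.Adj v3 v6) (n46 : ¬ G.Adj v4 v6) (d02 : v0 ≠ v2) (d03 : v0 ≠ v3) (d04 : v0 ≠ v4) (d05 : v0 ≠ v5) (d13 : v1 ≠ v3) (d14 : v1 ≠ v4) (d15 : v1 ≠ v5) (d16 : v1 ≠ v6) (d24 : v2 ≠ v4) (d25 : v2 ≠ v5) (d26 : v2 ≠ v6) (d35 : v3 ≠ v5) (d36 : v3 ≠ v6) (d46 : v4 ≠ v6) : False := by
  have m0 : (![v0, v1, v2, v3, v4, v5, v6] : Fin 7 → V) 0 = v0 := rfl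
  have m1 : (![v0, v1, v2, v3, v4, v5, v6] : Fin 7 → V) 1 = v1 := rfl
  have m2 : (![v0, v1, v2, v3, v4, v5, v6] : Fin 7 → V) 2 = v2 := rfl
  have m3 : (![v0, v1, v2, v3, v4, v5, v6] : Fin 7 → V) 3 = v3 := rfl
  have m4 : (![v0, v1, v2, v3, v4, v5, v6] : Fin 7 → V) 4 = v4 := rfl
  have m5 : (![v0, v1, v2, v3, v4, v5, v6] : Fin 7 → V) 5 = v5 := rfl
  have m6 : (![v0, v1, v2, v3, v4, v5, v6] : Fin 7 → V) 6 = v6 := rfl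
  have e01' := e01.symm
  have d01a := e01.ne
  have d01b := e01.ne'
  have e12' := e12.symm
  have d12a := e12.ne
  have d12b := e12.ne'
  have e23' := e23.symm
  have d23a := e23.ne
  have d23b := e23.ne'
  have e34' := e34.symm
  have d34a := e34.ne
  have d34b := e34.ne'
  have e45' := e45.symm
  have d45a := e45.ne
  have d45b := e45.ne'
  have e56' := e56.symm
  have d56a := e56.ne
  have d56b := e56.ne'
  have e60' := e60.symm
  have d60a := e60.ne
  have d60b := e60.ne'
  have n02' : ¬ G.Adj v2 v0 := fun h => n02 h.symm
  have d02' := d02.symm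
  have n03' : ¬ G.Adj v3 v0 := fun h => n03 h.symm
  have d03' := d03.symm
  have n04' : ¬ G.Adj v4 v0 := fun h => n04 h.symm
  have d04' := d04.symm
  have n05' : ¬ G.Adj v5 v0 := fun h => n05 h.symm
  have d05' := d05.symm
  have n13' : ¬ G.Adj v3 v1 := fun h => n13 h.symm
  have d13' := d13.symm
  have n14' : ¬ G.Adj v4 v1 := fun h => n14 h.symm
  have d14' := d14.symm
  have n15' : ¬ G.Adj v5 v1 := fun h => n15 h.symm
  have d15' := d15.symm
  have n16' : ¬ G.Adj v6 v1 := fun h => n16 h.symm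
  have d16' := d16.symm
  have n24' : ¬ G.Adj v4 v2 := fun h => n24 h.symm
  have d24' := d24.symm
  have n25' : ¬ G.Adj v5 v2 := fun h => n25 h.symm
  have d25' := d25.symm
  have n26' : ¬ G.Adj v6 v2 := fun h => n26 h.symm
  have d26' := d26.symm
  have n35' : ¬ G.Adj v5 v3 := fun h => n35 h.symm
  have d35' := d35.symm
  have n36' : ¬ G.Adj v6 v3 := fun h => n36 h.symm
  have d36' := d36.symm
  have n46' : ¬ G.Adj v6 v4 := fun h => n46 h.symm
  have d46' := d46.symm
  apply chordal_no_cycle G hch 7 (by norm_num) ![v0, v1, v2, v3, v4, v5, v6]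
  · intro i j h
    fin_cases i <;> fin_cases j <;>
      simp only [m0,m1,m2,m3,m4,m5,m6] at h <;>
      first | rfl | exact absurd h (by assumption)
  · intro i j
    fin_cases i <;> fin_cases j <;>
      simp only [m0,m1,m2,m3,m4,m5,m6] <;> norm_num <;>
      first | assumption | exact G.irrefl

lemma noC8 (G : SimpleGraph V) (hch : Chordal G) (v0 v1 v2 v3 v4 v5 v6 v7 : V)
    (e01 : G.Adj v0 v1) (e12 : G.Adj v1 v2) (e23 : G.Adj v2 v3) (e34 : G.Adj v3 v4) (e45 : G.Adj v4 v5) (e56 : G.Adj v5 v6) (e67 : G.Adj v6 v7) (e70 : G.Adj v7 v0) (n02 : ¬ G.Adj v0 v2) (n03 : ¬ G.Adj v0 v3) (n04 : ¬ G.Adj v0 v4) (n05 : ¬ G.Adj v0 v5) (n06 : ¬ G.Adj v0 v6) (n13 : ¬ G.Adj v1 v3) (n14 : ¬ G.Adj v1 v4) (n15 : ¬ G.Adj v1 v5) (n16 : ¬ G.Adj v1 v6) (n17 : ¬ G.Adj v1 v7) (n24 : ¬ G.Adj v2 v4) (n25 : ¬ G.Adj v2 v5) (n26 : ¬ G.Adj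 v2 v6) (n27 : ¬ G.Adj v2 v7) (n35 : ¬ G.Adj v3 v5) (n36 : ¬ G.Adj v3 v6) (n37 : ¬ G.Adj v3 v7) (n46 : ¬ G.Adj v4 v6) (n47 : ¬ G.Adj v4 v7) (n57 : ¬ G.Adj v5 v7) (d02 : v0 ≠ v2) (d03 : v0 ≠ v3) (d04 : v0 ≠ v4) (d05 : v0 ≠ v5) (d06 : v0 ≠ v6) (d13 : v1 ≠ v3) (d14 : v1 ≠ v4) (d15 : v1 ≠ v5) (d16 : v1 ≠ v6) (d17 : v1 ≠ v7) (d24 : v2 ≠ v4) (d25 : v2 ≠ v5) (d26 : v2 ≠ v6) (d27 : v2 ≠ v7) (d35 : v3 ≠ v5) (d36 : v3 ≠ v6) (d37 : v3 ≠ v7) (d46 : v4 ≠ v6) (d47 : v4 ≠ v7) (d57 : v5 ≠ v7) : False := by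
  have m0 : (![v0, v1, v2, v3, v4, v5, v6, v7] : Fin 8 → V) 0 = v0 := rfl
  have m1 : (![v0, v1, v2, v3, v4, v5, v6, v7] : Fin 8 → V) 1 = v1 := rfl
  have m2 : (![v0, v1, v2, v3, v4, v5, v6, v7] : Fin 8 → V) 2 = v2 := rfl
  have m3 : (![v0, v1, v2, v3, v4, v5, v6, v7] : Fin 8 → V) 3 = v3 := rfl
  have m4 : (![v0, v1, v2, v3, v4, v5, v6, v7] : Fin 8 → V) 4 = v4 := rfl
  have m5 : (![v0, v1, v2, v3, v4, v5, v6, v7] : Fin 8 → V) 5 = v5 := rfl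
  have m6 : (![v0, v1, v2, v3, v4, v5, v6, v7] : Fin 8 → V) 6 = v6 := rfl
  have m7 : (![v0, v1, v2, v3, v4, v5, v6, v7] : Fin 8 → V) 7 = v7 := rfl
  have e01' := e01.symm
  have d01a := e01.ne
  have d01b := e01.ne'
  have e12' := e12.symm
  have d12a := e12.ne
  have d12b := e12.ne'
  have e23' := e23.symm
  have d23a := e23.ne
  have d23b := e23.ne'
  have e34' := e34.symm
  have d34a := e34.ne
  have d34b := e34.ne'
  have e45' := e45.symm
  have d45a := e45.ne
  have d45b := e45.ne'
  have e56' := e56.symm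
  have d56a := e56.ne
  have d56b := e56.ne'
  have e67' := e67.symm
  have d67a := e67.ne
  have d67b := e67.ne'
  have e70' := e70.symm
  have d70a := e70.ne
  have d70b := e70.ne'
  have n02' : ¬ G.Adj v2 v0 := fun h => n02 h.symm
  have d02' := d02.symm
  have n03' : ¬ G.Adj v3 v0 := fun h => n03 h.symm
  have d03' := d03.symm
  have n04' : ¬ G.Adj v4 v0 := fun h => n04 h.symm
  have d04' := d04.symm
  have n05' : ¬ G.Adj v5 v0 := fun h => n05 h.symm
  have d05' := d05.symm
  have n06' : ¬ G.Adj v6 v0 := fun h => n06 h.symm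
  have d06' := d06.symm
  have n13' : ¬ G.Adj v3 v1 := fun h => n13 h.symm
  have d13' := d13.symm
  have n14' : ¬ G.Adj v4 v1 := fun h => n14 h.symm
  have d14' := d14.symm
  have n15' : ¬ G.Adj v5 v1 := fun h => n15 h.symm
  have d15' := d15.symm
  have n16' : ¬ G.Adj v6 v1 := fun h => n16 h.symm
  have d16' := d16.symm
  have n17' : ¬ G.Adj v7 v1 := fun h => n17 h.symm
  have d17' := d17.symm
  have n24' : ¬ G.Adj v4 v2 := fun h => n24 h.symm
  have d24' := d24.symm
  have n25' : ¬ G.Adj v5 v2 := fun h => n25 h.symm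
  have d25' := d25.symm
  have n26' : ¬ G.Adj v6 v2 := fun h => n26 h.symm
  have d26' := d26.symm
  have n27' : ¬ G.Adj v7 v2 := fun h => n27 h.symm
  have d27' := d27.symm
  have n35' : ¬ G.Adj v5 v3 := fun h => n35 h.symm
  have d35' := d35.symm
  have n36' : ¬ G.Adj v6 v3 := fun h => n36 h.symm
  have d36' := d36.symm
  have n37' : ¬ G.Adj v7 v3 := fun h => n37 h.symm
  have d37' := d37.symm
  have n46' : ¬ G.Adj v6 v4 := fun h => n46 h.symm
  have d46' := d46.symm
  have n47' : ¬ G.Adj v7 v4 := fun h => n47 h.symm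
  have d47' := d47.symm
  have n57' : ¬ G.Adj v7 v5 := fun h => n57 h.symm
  have d57' := d57.symm
  apply chordal_no_cycle G hch 8 (by norm_num) ![v0, v1, v2, v3, v4, v5, v6, v7]
  · intro i j h
    fin_cases i <;> fin_cases j <;>
      simp only [m0,m1,m2,m3,m4,m5,m6,m7] at h <;>
      first | rfl | exact absurd h (by assumption)
  · intro i j
    fin_cases i <;> fin_cases j <;>
      simp only [m0,m1,m2,m3,m4,m5,m6,m7] <;> norm_num <;>
      first | assumption | exact G.irrefl

lemma noC9 (G : SimpleGraph V) (hch : Chordal G) (v0 v1 v2 v3 v4 v5 v6 v7 v8 : V)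
    (e01 : G.Adj v0 v1) (e12 : G.Adj v1 v2) (e23 : G.Adj v2 v3) (e34 : G.Adj v3 v4) (e45 : G.Adj v4 v5) (e56 : G.Adj v5 v6) (e67 : G.Adj v6 v7) (e78 : G.Adj v7 v8) (e80 : G.Adj v8 v0) (n02 : ¬ G.Adj v0 v2) (n03 : ¬ G.Adj v0 v3) (n04 : ¬ G.Adj v0 v4) (n05 : ¬ G.Adj v0 v5) (n06 : ¬ G.Adj v0 v6) (n07 : ¬ G.Adj v0 v7) (n13 : ¬ G.Adj v1 v3) (n14 : ¬ G.Adj v1 v4) (n15 : ¬ G.Adj v1 v5) (n16 : ¬ G.Adj v1 v6) (n17 : ¬ G.Adj v1 v7) (n18 : ¬ G.Adj v1 v8) (n24 : ¬ G.Adj v2 v4) (n25 : ¬ G.Adj v2 v5) (n26 : ¬ G.Adj v2 v6) (n27 : ¬ G.Adj v2 v7) (n28 : ¬ G.Adj v2 v8) (n35 : ¬ G.Adj v3 v5) (n36 : ¬ G.Adj v3 v6) (n37 : ¬ G.Adj v3 v7) (n38 : ¬ G.Adj v3 v8) (n46 : ¬ G.Adj v4 v6) (n47 : ¬ G.Adj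 v4 v7) (n48 : ¬ G.Adj v4 v8) (n57 : ¬ G.Adj v5 v7) (n58 : ¬ G.Adj v5 v8) (n68 : ¬ G.Adj v6 v8) (d02 : v0 ≠ v2) (d03 : v0 ≠ v3) (d04 : v0 ≠ v4) (d05 : v0 ≠ v5) (d06 : v0 ≠ v6) (d07 : v0 ≠ v7) (d13 : v1 ≠ v3) (d14 : v1 ≠ v4) (d15 : v1 ≠ v5) (d16 : v1 ≠ v6) (d17 : v1 ≠ v7) (d18 : v1 ≠ v8) (d24 : v2 ≠ v4) (d25 : v2 ≠ v5) (d26 : v2 ≠ v6) (d27 : v2 ≠ v7) (d28 : v2 ≠ v8) (d35 : v3 ≠ v5) (d36 : v3 ≠ v6) (d37 : v3 ≠ v7) (d38 : v3 ≠ v8) (d46 : v4 ≠ v6) (d47 : v4 ≠ v7) (d48 : v4 ≠ v8) (d57 : v5 ≠ v7) (d58 : v5 ≠ v8) (d68 : v6 ≠ v8) : False := by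
  have m0 : (![v0, v1, v2, v3, v4, v5, v6, v7, v8] : Fin 9 → V) 0 = v0 := rfl
  have m1 : (![v0, v1, v2, v3, v4, v5, v6, v7, v8] : Fin 9 → V) 1 = v1 := rfl
  have m2 : (![v0, v1, v2, v3, v4, v5, v6, v7, v8] : Fin 9 → V) 2 = v2 := rfl
  have m3 : (![v0, v1, v2, v3, v4, v5, v6, v7, v8] : Fin 9 → V) 3 = v3 := rfl
  have m4 : (![v0, v1, v2, v3, v4, v5, v6, v7, v8] : Fin 9 → V) 4 = v4 := rfl
  have m5 : (![v0, v1, v2, v3, v4, v5, v6, v7, v8] : Fin 9 → V) 5 = v5 := rfl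
  have m6 : (![v0, v1, v2, v3, v4, v5, v6, v7, v8] : Fin 9 → V) 6 = v6 := rfl
  have m7 : (![v0, v1, v2, v3, v4, v5, v6, v7, v8] : Fin 9 → V) 7 = v7 := rfl
  have m8 : (![v0, v1, v2, v3, v4, v5, v6, v7, v8] : Fin 9 → V) 8 = v8 := rfl
  have e01' := e01.symm
  have d01a := e01.ne
  have d01b := e01.ne'
  have e12' := e12.symm
  have d12a := e12.ne
  have d12b := e12.ne'
  have e23' := e23.symm
  have d23a := e23.ne
  have d23b := e23.ne'
  have e34' := e34.symm
  have d34a := e34.ne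
  have d34b := e34.ne'
  have e45' := e45.symm
  have d45a := e45.ne
  have d45b := e45.ne'
  have e56' := e56.symm
  have d56a := e56.ne
  have d56b := e56.ne'
  have e67' := e67.symm
  have d67a := e67.ne
  have d67b := e67.ne'
  have e78' := e78.symm
  have d78a := e78.ne
  have d78b := e78.ne'
  have e80' := e80.symm
  have d80a := e80.ne
  have d80b := e80.ne'
  have n02' : ¬ G.Adj v2 v0 := fun h => n02 h.symm
  have d02' := d02.symm
  have n03' : ¬ G.Adj v3 v0 := fun h => n03 h.symm
  have d03' := d03.symm
  have n04' : ¬ G.Adj v4 v0 := fun h => n04 h.symm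
  have d04' := d04.symm
  have n05' : ¬ G.Adj v5 v0 := fun h => n05 h.symm
  have d05' := d05.symm
  have n06' : ¬ G.Adj v6 v0 := fun h => n06 h.symm
  have d06' := d06.symm
  have n07' : ¬ G.Adj v7 v0 := fun h => n07 h.symm
  have d07' := d07.symm
  have n13' : ¬ G.Adj v3 v1 := fun h => n13 h.symm
  have d13' := d13.symm
  have n14' : ¬ G.Adj v4 v1 := fun h => n14 h.symm
  have d14' := d14.symm
  have n15' : ¬ G.Adj v5 v1 := fun h => n15 h.symm
  have d15' := d15.symm
  have n16' : ¬ G.Adj v6 v1 := fun h => n16 h.symm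
  have d16' := d16.symm
  have n17' : ¬ G.Adj v7 v1 := fun h => n17 h.symm
  have d17' := d17.symm
  have n18' : ¬ G.Adj v8 v1 := fun h => n18 h.symm
  have d18' := d18.symm
  have n24' : ¬ G.Adj v4 v2 := fun h => n24 h.symm
  have d24' := d24.symm
  have n25' : ¬ G.Adj v5 v2 := fun h => n25 h.symm
  have d25' := d25.symm
  have n26' : ¬ G.Adj v6 v2 := fun h => n26 h.symm
  have d26' := d26.symm
  have n27' : ¬ G.Adj v7 v2 := fun h => n27 h.symm
  have d27' := d27.symm
  have n28' : ¬ G.Adj v8 v2 := fun h => n28 h.symm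
  have d28' := d28.symm
  have n35' : ¬ G.Adj v5 v3 := fun h => n35 h.symm
  have d35' := d35.symm
  have n36' : ¬ G.Adj v6 v3 := fun h => n36 h.symm
  have d36' := d36.symm
  have n37' : ¬ G.Adj v7 v3 := fun h => n37 h.symm
  have d37' := d37.symm
  have n38' : ¬ G.Adj v8 v3 := fun h => n38 h.symm
  have d38' := d38.symm
  have n46' : ¬ G.Adj v6 v4 := fun h => n46 h.symm
  have d46' := d46.symm
  have n47' : ¬ G.Adj v7 v4 := fun h => n47 h.symm
  have d47' := d47.symm
  have n48' : ¬ G.Adj v8 v4 := fun h => n48 h.symm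
  have d48' := d48.symm
  have n57' : ¬ G.Adj v7 v5 := fun h => n57 h.symm
  have d57' := d57.symm
  have n58' : ¬ G.Adj v8 v5 := fun h => n58 h.symm
  have d58' := d58.symm
  have n68' : ¬ G.Adj v8 v6 := fun h => n68 h.symm
  have d68' := d68.symm
  apply chordal_no_cycle G hch 9 (by norm_num) ![v0, v1, v2, v3, v4, v5, v6, v7, v8]
  · intro i j h
    fin_cases i <;> fin_cases j <;>
      simp only [m0,m1,m2,m3,m4,m5,m6,m7,m8] at h <;>
      first | rfl | exact absurd h (by assumption)
  · intro i j
    fin_cases i <;> fin_cases j <;>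
      simp only [m0,m1,m2,m3,m4,m5,m6,m7,m8] <;> norm_num <;>
      first | assumption | exact G.irrefl

lemma noP9 (G : SimpleGraph V) (hP : PkFree G 9) (v0 v1 v2 v3 v4 v5 v6 v7 v8 : V)
    (e01 : G.Adj v0 v1) (e12 : G.Adj v1 v2) (e23 : G.Adj v2 v3) (e34 : G.Adj v3 v4) (e45 : G.Adj v4 v5) (e56 : G.Adj v5 v6) (e67 : G.Adj v6 v7) (e78 : G.Adj v7 v8) (n02 : ¬ G.Adj v0 v2) (n03 : ¬ G.Adj v0 v3) (n04 : ¬ G.Adj v0 v4) (n05 : ¬ G.Adj v0 v5) (n06 : ¬ G.Adj v0 v6) (n07 : ¬ G.Adj v0 v7) (n08 : ¬ G.Adj v0 v8) (n13 : ¬ G.Adj v1 v3) (n14 : ¬ G.Adj v1 v4) (n15 : ¬ G.Adj v1 v5) (n16 : ¬ G.Adj v1 v6) (n17 : ¬ G.Adj v1 v7) (n18 : ¬ G.Adj v1 v8) (n24 : ¬ G.Adj v2 v4) (n25 : ¬ G.Adj v2 v5) (n26 : ¬ G.Adj v2 v6) (n27 : ¬ G.Adj v2 v7) (n28 : ¬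 G.Adj v2 v8) (n35 : ¬ G.Adj v3 v5) (n36 : ¬ G.Adj v3 v6) (n37 : ¬ G.Adj v3 v7) (n38 : ¬ G.Adj v3 v8) (n46 : ¬ G.Adj v4 v6) (n47 : ¬ G.Adj v4 v7) (n48 : ¬ G.Adj v4 v8) (n57 : ¬ G.Adj v5 v7) (n58 : ¬ G.Adj v5 v8) (n68 : ¬ G.Adj v6 v8) (d02 : v0 ≠ v2) (d03 : v0 ≠ v3) (d04 : v0 ≠ v4) (d05 : v0 ≠ v5) (d06 : v0 ≠ v6) (d07 : v0 ≠ v7) (d08 : v0 ≠ v8) (d13 : v1 ≠ v3) (d14 : v1 ≠ v4) (d15 : v1 ≠ v5) (d16 : v1 ≠ v6) (d17 : v1 ≠ v7) (d18 : v1 ≠ v8) (d24 : v2 ≠ v4) (d25 : v2 ≠ v5) (d26 : v2 ≠ v6) (d27 : v2 ≠ v7) (d28 : v2 ≠ v8) (d35 : v3 ≠ v5) (d36 : v3 ≠ v6) (d37 : v3 ≠ v7) (d38 : v3 ≠ v8) (d46 : v4 ≠ v6) (d47 : v4 ≠ v7) (d48 : v4 ≠ v8) (d57 : v5 ≠ v7)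 (d58 : v5 ≠ v8) (d68 : v6 ≠ v8) : False := by
  have m0 : (![v0, v1, v2, v3, v4, v5, v6, v7, v8] : Fin 9 → V) 0 = v0 := rfl
  have m1 : (![v0, v1, v2, v3, v4, v5, v6, v7, v8] : Fin 9 → V) 1 = v1 := rfl
  have m2 : (![v0, v1, v2, v3, v4, v5, v6, v7, v8] : Fin 9 → V) 2 = v2 := rfl
  have m3 : (![v0, v1, v2, v3, v4, v5, v6, v7, v8] : Fin 9 → V) 3 = v3 := rfl
  have m4 : (![v0, v1, v2, v3, v4, v5, v6, v7, v8] : Fin 9 → V) 4 = v4 := rfl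
  have m5 : (![v0, v1, v2, v3, v4, v5, v6, v7, v8] : Fin 9 → V) 5 = v5 := rfl
  have m6 : (![v0, v1, v2, v3, v4, v5, v6, v7, v8] : Fin 9 → V) 6 = v6 := rfl
  have m7 : (![v0, v1, v2, v3, v4, v5, v6, v7, v8] : Fin 9 → V) 7 = v7 := rfl
  have m8 : (![v0, v1, v2, v3, v4, v5, v6, v7, v8] : Fin 9 → V) 8 = v8 := rfl
  have e01' := e01.symm
  have d01a := e01.ne
  have d01b := e01.ne'
  have e12' := e12.symm
  have d12a := e12.ne
  have d12b := e12.ne'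
  have e23' := e23.symm
  have d23a := e23.ne
  have d23b := e23.ne'
  have e34' := e34.symm
  have d34a := e34.ne
  have d34b := e34.ne'
  have e45' := e45.symm
  have d45a := e45.ne
  have d45b := e45.ne'
  have e56' := e56.symm
  have d56a := e56.ne
  have d56b := e56.ne'
  have e67' := e67.symm
  have d67a := e67.ne
  have d67b := e67.ne'
  have e78' := e78.symm
  have d78a := e78.ne
  have d78b := e78.ne'
  have n02' : ¬ G.Adj v2 v0 := fun h => n02 h.symm
  have d02' := d02.symm
  have n03' : ¬ G.Adj v3 v0 := fun h => n03 h.symm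
  have d03' := d03.symm
  have n04' : ¬ G.Adj v4 v0 := fun h => n04 h.symm
  have d04' := d04.symm
  have n05' : ¬ G.Adj v5 v0 := fun h => n05 h.symm
  have d05' := d05.symm
  have n06' : ¬ G.Adj v6 v0 := fun h => n06 h.symm
  have d06' := d06.symm
  have n07' : ¬ G.Adj v7 v0 := fun h => n07 h.symm
  have d07' := d07.symm
  have n08' : ¬ G.Adj v8 v0 := fun h => n08 h.symm
  have d08' := d08.symm
  have n13' : ¬ G.Adj v3 v1 := fun h => n13 h.symm
  have d13' := d13.symm
  have n14' : ¬ G.Adj v4 v1 := fun h => n14 h.symm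
  have d14' := d14.symm
  have n15' : ¬ G.Adj v5 v1 := fun h => n15 h.symm
  have d15' := d15.symm
  have n16' : ¬ G.Adj v6 v1 := fun h => n16 h.symm
  have d16' := d16.symm
  have n17' : ¬ G.Adj v7 v1 := fun h => n17 h.symm
  have d17' := d17.symm
  have n18' : ¬ G.Adj v8 v1 := fun h => n18 h.symm
  have d18' := d18.symm
  have n24' : ¬ G.Adj v4 v2 := fun h => n24 h.symm
  have d24' := d24.symm
  have n25' : ¬ G.Adj v5 v2 := fun h => n25 h.symm
  have d25' := d25.symm
  have n26' : ¬ G.Adj v6 v2 := fun h => n26 h.symm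
  have d26' := d26.symm
  have n27' : ¬ G.Adj v7 v2 := fun h => n27 h.symm
  have d27' := d27.symm
  have n28' : ¬ G.Adj v8 v2 := fun h => n28 h.symm
  have d28' := d28.symm
  have n35' : ¬ G.Adj v5 v3 := fun h => n35 h.symm
  have d35' := d35.symm
  have n36' : ¬ G.Adj v6 v3 := fun h => n36 h.symm
  have d36' := d36.symm
  have n37' : ¬ G.Adj v7 v3 := fun h => n37 h.symm
  have d37' := d37.symm
  have n38' : ¬ G.Adj v8 v3 := fun h => n38 h.symm
  have d38' := d38.symm
  have n46' : ¬ G.Adj v6 v4 := fun h => n46 h.symm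
  have d46' := d46.symm
  have n47' : ¬ G.Adj v7 v4 := fun h => n47 h.symm
  have d47' := d47.symm
  have n48' : ¬ G.Adj v8 v4 := fun h => n48 h.symm
  have d48' := d48.symm
  have n57' : ¬ G.Adj v7 v5 := fun h => n57 h.symm
  have d57' := d57.symm
  have n58' : ¬ G.Adj v8 v5 := fun h => n58 h.symm
  have d58' := d58.symm
  have n68' : ¬ G.Adj v8 v6 := fun h => n68 h.symm
  have d68' := d68.symm
  apply hP
  refine ⟨![v0, v1, v2, v3, v4, v5, v6, v7, v8], ?_, ?_⟩
  · intro i j h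
    fin_cases i <;> fin_cases j <;>
      simp only [m0,m1,m2,m3,m4,m5,m6,m7,m8] at h <;>
      first | rfl | exact absurd h (by assumption)
  · intro i j
    fin_cases i <;> fin_cases j <;>
      simp only [m0,m1,m2,m3,m4,m5,m6,m7,m8] <;> norm_num <;>
      first | assumption | exact G.irrefl


section core
variable {G : SimpleGraph V} {IR : Set V}

lemma mem_cnbr {x u : V} : u ∈ cnbr G x ↔ u = x ∨ G.Adj x u := by
  simp [cnbr, SimpleGraph.mem_neighborSet]

lemma cn_eq_of_subset (hIR : IsIrredundantSet G IR) {b c : V} (hb : b ∈ IR)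
    (hsub : cnbr G c ⊆ cnbr G b) : cnbr G c = cnbr G b := by
  obtain ⟨h1, h2, _⟩ := hIR
  obtain ⟨y, hy, hyc⟩ := h1 c
  have hyb : cnbr G y ⊆ cnbr G b := hyc.trans hsub
  have heq : cnbr G y = cnbr G b := by
    by_contra hne
    exact h2 b hb y (hyb.ssubset_of_ne hne)
  exact le_antisymm hsub (heq ▸ hyc)

lemma exists_next (hIR : IsIrredundantSet G IR) {b c w : V} (hb : b ∈ IR)
    (hw : w ∈ cnbr G b) (hw' : w ∉ cnbr G c) :
    ∃ d, d ∈ cnbr G c ∧ d ∉ cnbr G b := by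
  by_contra h
  push_neg at h
  have hsub : cnbr G c ⊆ cnbr G b := fun d hd => h d hd
  have := cn_eq_of_subset hIR hb hsub
  exact hw' (this ▸ hw)

lemma comp_subset_of_mem {C₁ C₂ : Set V} (hC1 : IsCompOf G IR C₁) (hC2 : IsCompOf G IR C₂)
    {x : V} (hx1 : x ∈ C₁) (hx2 : x ∈ C₂) : C₁ ⊆ C₂ := by
  intro z hz
  obtain ⟨hsub1, _, hconn1, _⟩ := hC1
  have hreach := hconn1.preconnected ⟨x, hx1⟩ ⟨z, hz⟩
  obtain ⟨p⟩ := hreach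
  have key : ∀ (u v : ↥C₁) (_ : (G.induce C₁).Walk u v), u.val ∈ C₂ → v.val ∈ C₂ := by
    intro u v p
    induction p with
    | nil => exact id
    | cons h p ih =>
      rename_i u' w' v' -- endpoints
      intro hu
      apply ih
      have hadj : G.Adj u'.val w'.val := h
      exact hC2.2.2.2 u'.val hu w'.val (hsub1 w'.2) hadj
  exact key _ _ p hx2

lemma comp_eq_of_mem {C₁ C₂ : Set V} (hC1 : IsCompOf G IR C₁) (hC2 : IsCompOf G IR C₂)
    {x : V} (hx1 : x ∈ C₁) (hx2 : x ∈ C₂) : C₁ = C₂ :=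
  le_antisymm (comp_subset_of_mem hC1 hC2 hx1 hx2) (comp_subset_of_mem hC2 hC1 hx2 hx1)

lemma comp_no_edge {C₁ C₂ : Set V} (hC1 : IsCompOf G IR C₁) (hC2 : IsCompOf G IR C₂)
    (hne : C₁ ≠ C₂) {x y : V} (hx : x ∈ C₁) (hy : y ∈ C₂) : x ≠ y ∧ ¬ G.Adj x y := by
  constructor
  · rintro rfl
    exact hne (comp_eq_of_mem hC1 hC2 hx hy)
  · intro hadj
    have hyC1 : y ∈ C₁ := hC1.2.2.2 x hx y (hC2.1 hy) hadj
    exact hne (comp_eq_of_mem hC1 hC2 hyC1 hy)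

lemma boundary_edge {C : Set V} {a : V} (hconn : (G.induce C).Connected)
    {y z : V} (hy : y ∈ C) (hz : z ∈ C) (hay : G.Adj a y) (haz : ¬ G.Adj a z) :
    ∃ p₁ ∈ C, ∃ p₂ ∈ C, G.Adj a p₁ ∧ ¬ G.Adj a p₂ ∧ G.Adj p₁ p₂ := by
  obtain ⟨p⟩ := hconn.preconnected ⟨y, hy⟩ ⟨z, hz⟩
  have key : ∀ (u v : ↥C) (_ : (G.induce C).Walk u v), G.Adj a u.val → ¬ G.Adj a v.val →
      ∃ p₁ ∈ C, ∃ p₂ ∈ C, G.Adj a p₁ ∧ ¬ G.Adj a p₂ ∧ G.Adj p₁ p₂ := by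
    intro u v p
    induction p with
    | nil => exact fun h h' => absurd h h'
    | cons h p ih =>
      rename_i u' w' v'
      intro hu hv
      by_cases hc : G.Adj a w'.val
      · exact ih hc hv
      · have hadj : G.Adj u'.val w'.val := h
        exact ⟨u'.val, u'.2, w'.val, w'.2, hu, hc, hadj⟩
  exact key _ _ p hay haz

end core

section leg
variable (G : SimpleGraph V)

structure Leg (a : V) (C : Set V) where
  p1 : V
  p2 : V
  p3 : V
  p4 : V
  mem1 : p1 ∈ C
  mem2 : p2 ∈ C
  h1 : G.Adj a p1
  h2 : ¬ G.Adj a p2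
  h3 : ¬ G.Adj a p3
  h4 : ¬ G.Adj a p4
  na2 : a ≠ p2
  na3 : a ≠ p3
  na4 : a ≠ p4
  e12 : G.Adj p1 p2
  e23 : G.Adj p2 p3
  e34 : G.Adj p3 p4
  n13 : ¬ G.Adj p1 p3
  n14 : ¬ G.Adj p1 p4
  n24 : ¬ G.Adj p2 p4
  d13 : p1 ≠ p3
  d14 : p1 ≠ p4
  d24 : p2 ≠ p4

end leg

section build
variable {G : SimpleGraph V} {IR : Set V} {a : V} {C : Set V}

lemma build_leg (hch : Chordal G) (hIR : IsIrredundantSet G IR) (hC : IsCompOf G IR C)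
    (ha : a ∉ IR) (hadj : ∃ y ∈ C, G.Adj a y) (hnsub : ¬ C ⊆ G.neighborSet a) :
    Nonempty (Leg G a C) := by
  obtain ⟨y, hy, hay⟩ := hadj
  obtain ⟨z, hz, haz⟩ := Set.not_subset.mp hnsub
  rw [SimpleGraph.mem_neighborSet] at haz
  obtain ⟨p1, hp1C, p2, hp2C, h1, h2, e12⟩ := boundary_edge hC.2.2.1 hy hz hay haz
  have hp1IR : p1 ∈ IR := hC.1 hp1C
  have hp2IR : p2 ∈ IR := hC.1 hp2C
  have na2 : a ≠ p2 := fun h => ha (h ▸ hp2IR)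
  have hacn1 : a ∈ cnbr G p1 := mem_cnbr.mpr (Or.inr h1.symm)
  have hacn2 : a ∉ cnbr G p2 := by
    rw [mem_cnbr]
    rintro (h | h)
    · exact na2 h
    · exact h2 h.symm
  -- get p3
  obtain ⟨p3, hp3c2, hp3n1⟩ := exists_next hIR hp1IR hacn1 hacn2
  have hp2cn1 : p2 ∈ cnbr G p1 := mem_cnbr.mpr (Or.inr e12)
  have d23 : p3 ≠ p2 := fun h => hp3n1 (h ▸ hp2cn1)
  have e23 : G.Adj p2 p3 := by
    rcases mem_cnbr.mp hp3c2 with h | h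
    · exact absurd h d23
    · exact h
  have n13 : ¬ G.Adj p1 p3 := fun h => hp3n1 (mem_cnbr.mpr (Or.inr h))
  have d13 : p1 ≠ p3 := fun h => hp3n1 (mem_cnbr.mpr (Or.inl h.symm))
  have na3 : a ≠ p3 := fun h => hacn2 (h ▸ hp3c2)
  have h3 : ¬ G.Adj a p3 := by
    intro h
    exact noC4 G hch a p1 p2 p3 h1 e12 e23 h.symm h2 n13 na2 d13
  -- get p4
  have hp1cn2 : p1 ∈ cnbr G p2 := mem_cnbr.mpr (Or.inr e12.symm)
  have hp1ncn3 : p1 ∉ cnbr G p3 := by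
    rw [mem_cnbr]
    rintro (h | h)
    · exact d13 h
    · exact n13 h.symm
  obtain ⟨p4, hp4c3, hp4n2⟩ := exists_next hIR hp2IR hp1cn2 hp1ncn3
  have hp3cn2 : p3 ∈ cnbr G p2 := mem_cnbr.mpr (Or.inr e23)
  have d34 : p4 ≠ p3 := fun h => hp4n2 (h ▸ hp3cn2)
  have e34 : G.Adj p3 p4 := by
    rcases mem_cnbr.mp hp4c3 with h | h
    · exact absurd h d34
    · exact h
  have n24 : ¬ G.Adj p2 p4 := fun h => hp4n2 (mem_cnbr.mpr (Or.inr h))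
  have d24 : p2 ≠ p4 := fun h => hp4n2 (mem_cnbr.mpr (Or.inl h.symm))
  have na4 : a ≠ p4 := by
    rintro rfl
    rcases mem_cnbr.mp hp4c3 with h | h
    · exact na3 h
    · exact h3 h.symm
  have d14 : p1 ≠ p4 := fun h => hp1ncn3 (by rw [h]; exact hp4c3)
  have n14 : ¬ G.Adj p1 p4 := by
    intro h
    exact noC4 G hch p1 p2 p3 p4 e12 e23 e34 h.symm n13 n24 d13 d24
  have h4 : ¬ G.Adj a p4 := by
    intro h
    exact noC5 G hch a p1 p2 p3 p4 h1 e12 e23 e34 h.symm h2 h3 n13 n14 n24 na2 na3 d13 d14 d24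
  exact ⟨⟨p1, p2, p3, p4, hp1C, hp2C, h1, h2, h3, h4, na2, na3, na4,
    e12, e23, e34, n13, n14, n24, d13, d14, d24⟩⟩

end build

section cross
variable {G : SimpleGraph V} {a : V} {C₁ C₂ : Set V}

def EE (G : SimpleGraph V) (x y : V) : Prop := x ≠ y ∧ ¬ G.Adj x y

lemma EE.symm {x y : V} (h : EE G x y) : EE G y x := ⟨h.1.symm, fun hh => h.2 hh.symm⟩

lemma cross13 (hch : Chordal G) (L : Leg G a C₁) (M : Leg G a C₂)
    (b11 : EE G L.p1 M.p1) (b12 : EE G L.p1 M.p2) : EE G L.p1 M.p3 := by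
  constructor
  · intro h
    exact b12.2 (h ▸ M.e23).symm
  · intro h
    exact noC5 G hch a L.p1 M.p3 M.p2 M.p1 L.h1 h M.e23.symm M.e12.symm M.h1.symm
      M.h3 M.h2 b12.2 b11.2 (fun hh => M.n13 hh.symm)
      M.na3 M.na2 b12.1 b11.1 M.d13.symm

lemma cross23 (hch : Chordal G) (L : Leg G a C₁) (M : Leg G a C₂)
    (b11 : EE G L.p1 M.p1) (b12 : EE G L.p1 M.p2)
    (b21 : EE G L.p2 M.p1) (b22 : EE G L.p2 M.p2)
    (E13 : EE G L.p1 M.p3) : EE G L.p2 M.p3 := by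
  constructor
  · intro h
    exact b22.2 (h ▸ M.e23).symm
  · intro h
    exact noC6 G hch a L.p1 L.p2 M.p3 M.p2 M.p1 L.h1 L.e12 h M.e23.symm M.e12.symm M.h1.symm
      L.h2 M.h3 M.h2 E13.2 b12.2 b11.2 b22.2 b21.2 (fun hh => M.n13 hh.symm)
      L.na2 M.na3 M.na2 E13.1 b12.1 b11.1 b22.1 b21.1 M.d13.symm

lemma cross14 (hch : Chordal G) (L : Leg G a C₁) (M : Leg G a C₂)
    (b11 : EE G L.p1 M.p1) (b12 : EE G L.p1 M.p2)
    (E13 : EE G L.p1 M.p3) : EE G L.p1 M.p4 := by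
  constructor
  · intro h
    exact E13.2 (h ▸ M.e34).symm
  · intro h
    exact noC6 G hch a L.p1 M.p4 M.p3 M.p2 M.p1 L.h1 h M.e34.symm M.e23.symm M.e12.symm M.h1.symm
      M.h4 M.h3 M.h2 E13.2 b12.2 b11.2 (fun hh => M.n24 hh.symm) (fun hh => M.n14 hh.symm) (fun hh => M.n13 hh.symm)
      M.na4 M.na3 M.na2 E13.1 b12.1 b11.1 M.d24.symm M.d14.symm M.d13.symm

lemma cross24 (hch : Chordal G) (L : Leg G a C₁) (M : Leg G a C₂)
    (b11 : EE G L.p1 M.p1) (b12 : EE G L.p1 M.p2)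
    (b21 : EE G L.p2 M.p1) (b22 : EE G L.p2 M.p2)
    (E13 : EE G L.p1 M.p3) (E23 : EE G L.p2 M.p3) (E14 : EE G L.p1 M.p4) :
    EE G L.p2 M.p4 := by
  constructor
  · intro h
    exact E23.2 (h ▸ M.e34).symm
  · intro h
    exact noC7 G hch a L.p1 L.p2 M.p4 M.p3 M.p2 M.p1
      L.h1 L.e12 h M.e34.symm M.e23.symm M.e12.symm M.h1.symm
      L.h2 M.h4 M.h3 M.h2 E14.2 E13.2 b12.2 b11.2 E23.2 b22.2 b21.2
      (fun hh => M.n24 hh.symm) (fun hh => M.n14 hh.symm) (fun hh => M.n13 hh.symm)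
      L.na2 M.na4 M.na3 M.na2 E14.1 E13.1 b12.1 b11.1 E23.1 b22.1 b21.1
      M.d24.symm M.d14.symm M.d13.symm

lemma cross33 (hch : Chordal G) (L : Leg G a C₁) (M : Leg G a C₂)
    (b11 : EE G L.p1 M.p1) (b12 : EE G L.p1 M.p2)
    (b21 : EE G L.p2 M.p1) (b22 : EE G L.p2 M.p2)
    (E13LM : EE G L.p1 M.p3) (E23LM : EE G L.p2 M.p3)
    (E13ML : EE G M.p1 L.p3) (E23ML : EE G M.p2 L.p3) : EE G L.p3 M.p3 := by
  constructor
  · intro h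
    exact E23ML.2 (h ▸ M.e23)
  · intro h
    exact noC7 G hch a L.p1 L.p2 L.p3 M.p3 M.p2 M.p1
      L.h1 L.e12 L.e23 h M.e23.symm M.e12.symm M.h1.symm
      L.h2 L.h3 M.h3 M.h2 L.n13 E13LM.2 b12.2 b11.2 E23LM.2 b22.2 b21.2
      (fun hh => E23ML.2 hh.symm) (fun hh => E13ML.2 hh.symm) (fun hh => M.n13 hh.symm)
      L.na2 L.na3 M.na3 M.na2 L.d13 E13LM.1 b12.1 b11.1 E23LM.1 b22.1 b21.1
      E23ML.1.symm E13ML.1.symm M.d13.symm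

lemma cross34 (hch : Chordal G) (L : Leg G a C₁) (M : Leg G a C₂)
    (b11 : EE G L.p1 M.p1) (b12 : EE G L.p1 M.p2)
    (b21 : EE G L.p2 M.p1) (b22 : EE G L.p2 M.p2)
    (E13LM : EE G L.p1 M.p3) (E14LM : EE G L.p1 M.p4)
    (E23LM : EE G L.p2 M.p3) (E24LM : EE G L.p2 M.p4)
    (E13ML : EE G M.p1 L.p3) (E23ML : EE G M.p2 L.p3)
    (E33 : EE G L.p3 M.p3) : EE G L.p3 M.p4 := by
  constructor
  · intro h
    exact E33.2 (by rw [h]; exact M.e34.symm)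
  · intro h
    exact noC8 G hch a L.p1 L.p2 L.p3 M.p4 M.p3 M.p2 M.p1
      L.h1 L.e12 L.e23 h M.e34.symm M.e23.symm M.e12.symm M.h1.symm
      L.h2 L.h3 M.h4 M.h3 M.h2
      L.n13 E14LM.2 E13LM.2 b12.2 b11.2
      E24LM.2 E23LM.2 b22.2 b21.2
      E33.2 (fun hh => E23ML.2 hh.symm) (fun hh => E13ML.2 hh.symm)
      (fun hh => M.n24 hh.symm) (fun hh => M.n14 hh.symm) (fun hh => M.n13 hh.symm)
      L.na2 L.na3 M.na4 M.na3 M.na2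
      L.d13 E14LM.1 E13LM.1 b12.1 b11.1
      E24LM.1 E23LM.1 b22.1 b21.1
      E33.1 E23ML.1.symm E13ML.1.symm
      M.d24.symm M.d14.symm M.d13.symm

lemma cross44 (hch : Chordal G) (L : Leg G a C₁) (M : Leg G a C₂)
    (b11 : EE G L.p1 M.p1) (b12 : EE G L.p1 M.p2)
    (b21 : EE G L.p2 M.p1) (b22 : EE G L.p2 M.p2)
    (E13LM : EE G L.p1 M.p3) (E14LM : EE G L.p1 M.p4)
    (E23LM : EE G L.p2 M.p3) (E24LM : EE G L.p2 M.p4)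
    (E13ML : EE G M.p1 L.p3) (E14ML : EE G M.p1 L.p4)
    (E23ML : EE G M.p2 L.p3) (E24ML : EE G M.p2 L.p4)
    (E33 : EE G L.p3 M.p3) (E34LM : EE G L.p3 M.p4) (E34ML : EE G M.p3 L.p4) :
    EE G L.p4 M.p4 := by
  constructor
  · intro h
    exact E34ML.2 (by rw [h]; exact M.e34)
  · intro h
    exact noC9 G hch a L.p1 L.p2 L.p3 L.p4 M.p4 M.p3 M.p2 M.p1
      L.h1 L.e12 L.e23 L.e34 h M.e34.symm M.e23.symm M.e12.symm M.h1.symm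
      L.h2 L.h3 L.h4 M.h4 M.h3 M.h2
      L.n13 L.n14 E14LM.2 E13LM.2 b12.2 b11.2
      L.n24 E24LM.2 E23LM.2 b22.2 b21.2
      E34LM.2 E33.2 (fun hh => E23ML.2 hh.symm) (fun hh => E13ML.2 hh.symm)
      (fun hh => E34ML.2 hh.symm) (fun hh => E24ML.2 hh.symm) (fun hh => E14ML.2 hh.symm)
      (fun hh => M.n24 hh.symm) (fun hh => M.n14 hh.symm) (fun hh => M.n13 hh.symm)
      L.na2 L.na3 L.na4 M.na4 M.na3 M.na2
      L.d13 L.d14 E14LM.1 E13LM.1 b12.1 b11.1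
      L.d24 E24LM.1 E23LM.1 b22.1 b21.1
      E34LM.1 E33.1 E23ML.1.symm E13ML.1.symm
      E34ML.1.symm E24ML.1.symm E14ML.1.symm
      M.d24.symm M.d14.symm M.d13.symm

end cross

end Aux

/-- In a `P₉`-free chordal graph, a redundant vertex is partially adjacent
to at most one irredundant component; to every other irredundant component it is either
non-adjacent or complete. -/
theorem stmt_8 [Fintype V] (G : SimpleGraph V) (hch : Chordal G) (hP9 : PkFree G 9)
    (IR : Set V) (hIR : IsIrredundantSet G IR) (a : V) (ha : a ∉ IR) :
    (∀ C₁ C₂ : Set V, IsCompOf G IR C₁ → IsCompOf G IR C₂ →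
      ((∃ y ∈ C₁, G.Adj a y) ∧ ¬ C₁ ⊆ G.neighborSet a) →
      ((∃ y ∈ C₂, G.Adj a y) ∧ ¬ C₂ ⊆ G.neighborSet a) →
      C₁ = C₂) ∧
    (∀ C : Set V, IsCompOf G IR C →
      ¬ ((∃ y ∈ C, G.Adj a y) ∧ ¬ C ⊆ G.neighborSet a) →
      ((∀ y ∈ C, ¬ G.Adj a y) ∨ C ⊆ G.neighborSet a)) := by
  constructor
  · intro C₁ C₂ hC1 hC2 hp1 hp2
    by_contra hne
    obtain ⟨L⟩ := build_leg hch hIR hC1 ha hp1.1 hp1.2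
    obtain ⟨M⟩ := build_leg hch hIR hC2 ha hp2.1 hp2.2
    have b11 : EE G L.p1 M.p1 := comp_no_edge hC1 hC2 hne L.mem1 M.mem1
    have b12 : EE G L.p1 M.p2 := comp_no_edge hC1 hC2 hne L.mem1 M.mem2
    have b21 : EE G L.p2 M.p1 := comp_no_edge hC1 hC2 hne L.mem2 M.mem1
    have b22 : EE G L.p2 M.p2 := comp_no_edge hC1 hC2 hne L.mem2 M.mem2
    have E13LM := cross13 hch L M b11 b12
    have E13ML := cross13 hch M L b11.symm b21.symm
    have E23LM := cross23 hch L M b11 b12 b21 b22 E13LM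
    have E23ML := cross23 hch M L b11.symm b21.symm b12.symm b22.symm E13ML
    have E14LM := cross14 hch L M b11 b12 E13LM
    have E14ML := cross14 hch M L b11.symm b21.symm E13ML
    have E24LM := cross24 hch L M b11 b12 b21 b22 E13LM E23LM E14LM
    have E24ML := cross24 hch M L b11.symm b21.symm b12.symm b22.symm E13ML E23ML E14ML
    have E33 := cross33 hch L M b11 b12 b21 b22 E13LM E23LM E13ML E23ML
    have E34LM := cross34 hch L M b11 b12 b21 b22 E13LM E14LM E23LM E24LM E13ML E23ML E33
    have E33' := cross33 hch M L b11.symm b21.symm b12.symm b22.symm E13ML E23ML E13LM E23LM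
    have E34ML := cross34 hch M L b11.symm b21.symm b12.symm b22.symm E13ML E14ML E23ML E24ML E13LM E23LM E33'
    have E44 := cross44 hch L M b11 b12 b21 b22 E13LM E14LM E23LM E24LM E13ML E14ML E23ML E24ML E33 E34LM E34ML
    exact noP9 G hP9 L.p4 L.p3 L.p2 L.p1 a M.p1 M.p2 M.p3 M.p4
      L.e34.symm L.e23.symm L.e12.symm L.h1.symm M.h1 M.e12 M.e23 M.e34
      (fun h => L.n24 h.symm) (fun h => L.n14 h.symm) (fun h => L.h4 h.symm)
      (fun h => E14ML.2 h.symm) (fun h => E24ML.2 h.symm) (fun h => E34ML.2 h.symm) E44.2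
      (fun h => L.n13 h.symm) (fun h => L.h3 h.symm)
      (fun h => E13ML.2 h.symm) (fun h => E23ML.2 h.symm) E33.2 E34LM.2
      (fun h => L.h2 h.symm) b21.2 b22.2 E23LM.2 E24LM.2
      b11.2 b12.2 E13LM.2 E14LM.2
      M.h2 M.h3 M.h4
      M.n13 M.n14 M.n24
      L.d24.symm L.d14.symm L.na4.symm E14ML.1.symm E24ML.1.symm E34ML.1.symm E44.1
      L.d13.symm L.na3.symm E13ML.1.symm E23ML.1.symm E33.1 E34LM.1
      L.na2.symm b21.1 b22.1 E23LM.1 E24LM.1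
      b11.1 b12.1 E13LM.1 E14LM.1
      M.na2 M.na3 M.na4
      M.d13 M.d14 M.d24
  · intro C hC hnot
    by_cases hex : ∃ y ∈ C, G.Adj a y
    · right
      by_contra hsub
      exact hnot ⟨hex, hsub⟩
    · left
      push_neg at hex
      exact hex
end

section
/- Let (C, ≤) be a finite partially ordered set with a least element r such that for every x ∈ C the set {y ∈ C : y ≤ x} is a chain (a tree order), and let H be the comparability graph of (C, ≤): the simple graph on vertex set C in which two distinct vertices are adjacent if and only if they are comparable in ≤. Let Z ⊆ C and let F be the set of maximal elements of Z (the x ∈ Z for which no y ∈ Z satisfies x < y). Then for every D ⊆ C: D dominates Z in H if and only if D dominates F in H. -/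
variable {V : Type*}

/-!
Every `z ∈ Z` lies below some maximal element `f` of `Z`. In the comparability graph of a tree
order, `z ≤ f` gives `N[f] ⊆ N[z]`: a vertex `d ≥ f` is above `z`, and a vertex `d ≤ f` lies with
`z` in the chain `{y | y ≤ f}`. So whatever dominates `f` also dominates `z`.
-/

lemma mem_cnbr_comm {G : SimpleGraph V} {x y : V} : y ∈ cnbr G x ↔ x ∈ cnbr G y := by
  simp only [cnbr, Set.mem_insert_iff, SimpleGraph.mem_neighborSet, eq_comm (a := x),
    G.adj_comm]

lemma mem_cnbrSet_iff {G : SimpleGraph V} {D : Set V} {x : V} :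
    x ∈ cnbrSet G D ↔ ∃ d ∈ D, x ∈ cnbr G d := by
  simp only [cnbrSet, Set.mem_iUnion₂, exists_prop]

lemma Dominates.of_forall_exists_cnbr_subset {G : SimpleGraph V} {D X Y : Set V}
    (h : Dominates G D Y) (hXY : ∀ x ∈ X, ∃ y ∈ Y, cnbr G y ⊆ cnbr G x) :
    Dominates G D X := by
  intro x hx
  obtain ⟨y, hy, hyx⟩ := hXY x hx
  obtain ⟨d, hd, hyd⟩ := mem_cnbrSet_iff.mp (h hy)
  exact mem_cnbrSet_iff.mpr ⟨d, hd, mem_cnbr_comm.mp (hyx (mem_cnbr_comm.mp hyd))⟩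

lemma mem_cnbr_iff_comparable {C : Type*} [PartialOrder C] {H : SimpleGraph C}
    (hH : ∀ x y : C, H.Adj x y ↔ x ≠ y ∧ (x ≤ y ∨ y ≤ x)) {x y : C} :
    y ∈ cnbr H x ↔ x ≤ y ∨ y ≤ x := by
  by_cases hxy : x = y
  · simp [cnbr, hxy]
  · simp [cnbr, SimpleGraph.mem_neighborSet, hH, hxy, Ne.symm hxy]

lemma cnbr_subset_cnbr_of_le {C : Type*} [PartialOrder C] {H : SimpleGraph C}
    (hH : ∀ x y : C, H.Adj x y ↔ x ≠ y ∧ (x ≤ y ∨ y ≤ x)) {z f : C}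
    (hchain : IsChain (· ≤ ·) {y | y ≤ f}) (hzf : z ≤ f) : cnbr H f ⊆ cnbr H z := by
  intro d hd
  rw [mem_cnbr_iff_comparable hH] at hd ⊢
  rcases hd with hfd | hdf
  · exact Or.inl (hzf.trans hfd)
  · exact hchain.total hzf hdf

theorem stmt_13_general {C : Type*} [Fintype C] [PartialOrder C]
    (hchain : ∀ x : C, IsChain (· ≤ ·) {y | y ≤ x})
    (H : SimpleGraph C)
    (hH : ∀ x y : C, H.Adj x y ↔ x ≠ y ∧ (x ≤ y ∨ y ≤ x))
    (Z F : Set C)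
    (hF : F = {x ∈ Z | ∀ y ∈ Z, ¬ x < y})
    (D : Set C) :
    Dominates H D Z ↔ Dominates H D F := by
  have hFZ : F ⊆ Z := hF ▸ Set.sep_subset _ _
  refine ⟨fun h ↦ hFZ.trans h, fun h ↦ h.of_forall_exists_cnbr_subset fun z hz ↦ ?_⟩
  obtain ⟨f, hzf, hf⟩ := Finite.exists_le_maximal (p := (· ∈ Z)) hz
  have hfF : f ∈ F := hF ▸ ⟨hf.prop, fun y hy ↦ hf.not_gt hy⟩
  exact ⟨f, hfF, cnbr_subset_cnbr_of_le hH (hchain f) hzf⟩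

/-- Let `(C, ≤)` be a finite tree order (least element, down-sets are
chains), `H` its comparability graph, `Z ⊆ C` and `F` the maximal elements of `Z`. Then a
set `D` dominates `Z` in `H` iff it dominates `F` in `H`. -/
theorem stmt_13 {C : Type*} [Fintype C] [PartialOrder C] [OrderBot C]
    (hchain : ∀ x : C, IsChain (· ≤ ·) {y | y ≤ x})
    (H : SimpleGraph C)
    (hH : ∀ x y : C, H.Adj x y ↔ x ≠ y ∧ (x ≤ y ∨ y ≤ x))
    (Z F : Set C)
    (hF : F = {x ∈ Z | ∀ y ∈ Z, ¬ x < y})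
    (D : Set C) :
    Dominates H D Z ↔ Dominates H D F :=
  stmt_13_general hchain H hH Z F hF D
end
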